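/- Let m(t), K(t), A_i(t), B_i(t) (i = 1,…,n) be nonnegative functions such that each A_i ≥ e is absolutely continuous and K ∈ L¹_loc([0,∞)). Let 𝒯 > 0, and suppose that for a.e. t ∈ (0,𝒯): (d/dt)A₁(t) + B₁(t) ≤ K(t)(log Σ_{i=1}^n A_i(t)) A₁(t), and for each i = 2,…,n, (d/dt)A_i(t) + B_i(t) ≤ K(t)(log Σ_{j=1}^n A_j(t)) A_i(t) + ζ A_{i−1}^α(t) B_{i−1}(t), where α ≥ 1 and ζ ≥ 1 are constants. Then Σ_{i=1}^n A_i(t) + Σ_{i=1}^n ∫₀^t B_i(s) ds ≤ Q(t) for all t ∈ [0,𝒯), where Q is a continuous function on [0,∞) determined only by the values A_i(0), i = 1,…,n, and by the function K. -/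

import Mathlib

noncomputable section
open MeasureTheory Real Set Filter

def AbsContOn (f : ℝ → ℝ) (a b : ℝ) : Prop :=
  ∀ ε > (0 : ℝ), ∃ δ > (0 : ℝ), ∀ n : ℕ, ∀ c d : Fin n → ℝ,
    (∀ i, a ≤ c i ∧ c i ≤ d i ∧ d i ≤ b) →
    (∀ i j, i ≠ j → Disjoint (Ioo (c i) (d i)) (Ioo (c j) (d j))) →
    (∑ i, (d i - c i)) < δ → (∑ i, |f (d i) - f (c i)|) < ε

/-!
Put `G₀ = A₀` and `G_{k+1} = A_{k+1} + ζ G_k^(α+1)` (indices start at `0`). Differentiating,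
`G_{k+1}' = A_{k+1}' + ζ (α+1) G_k^α G_k'`, and the dissipation `ζ (α+1) G_k^α B_k` contained in
the inequality for `G_k` absorbs the coupling term `ζ A_k^α B_k` of the inequality for `A_{k+1}`.
By induction `G_k' + B_k ≤ (α+1)^k K (log ∑ A) G_k`, so the Lyapunov function `Φ = ∑ G_k ≥ ∑ A`
satisfies `Φ' + ∑ B ≤ C K Φ log Φ` with `C = (α+1)^n`.
Then `(log log Φ)' ≤ C K`, so `log Φ ≤ Λ(t) := log Φ(0) · exp (∫₀ᵗ C K)` on `[0, t]`; integrating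
the inequality for `Φ` once more and bounding `C K Φ log Φ ≤ C K Λ e^Λ` gives
`Φ(t) + ∫₀ᵗ ∑ B ≤ Φ(0) + (∫₀ᵗ C K) Λ e^Λ`. Both integrations are the fundamental theorem of
calculus for absolutely continuous functions.
-/

theorem AbsContOn.absolutelyContinuousOnInterval {f : ℝ → ℝ} {a b : ℝ} (hf : AbsContOn f a b)
    (hab : a ≤ b) : AbsolutelyContinuousOnInterval f a b := by
  rw [absolutelyContinuousOnInterval_iff]
  intro ε hε
  obtain ⟨δ, hδ, H⟩ := hf ε hε
  refine ⟨δ, hδ, fun ⟨N, I⟩ ⟨hmem, hdisj⟩ hlen => ?_⟩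
  have hdist (g : ℝ → ℝ) (x y : ℝ) : dist (g x) (g y) = |g (max x y) - g (min x y)| := by
    rcases le_total x y with h | h <;> simp [h, Real.dist_eq, abs_sub_comm]
  rw [← Fin.sum_univ_eq_sum_range (fun i => dist (I i).1 (I i).2)] at hlen
  rw [← Fin.sum_univ_eq_sum_range (fun i => dist (f (I i).1) (f (I i).2))]
  simp only [hdist f]
  refine H N (fun i => min (I i).1 (I i).2) (fun i => max (I i).1 (I i).2) (fun i => ?_)
    (fun i j hij => ?_) ?_
  · obtain ⟨h1, h2⟩ := hmem i (Finset.mem_range.2 i.2)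
    rw [uIcc_of_le hab] at h1 h2
    exact ⟨le_min h1.1 h2.1, min_le_max, max_le h1.2 h2.2⟩
  · exact (hdisj (Finset.mem_range.2 i.2) (Finset.mem_range.2 j.2) (Fin.val_injective.ne hij)).mono
      Ioo_subset_Ioc_self Ioo_subset_Ioc_self
  · simpa only [Real.dist_eq, ← max_sub_min_eq_abs'] using hlen

theorem absolutelyContinuousOnInterval_const {F : Type*} [SeminormedAddCommGroup F] (c : F)
    (a b : ℝ) : AbsolutelyContinuousOnInterval (fun _ => c) a b :=
  (LipschitzWith.const c).lipschitzOnWith.absolutelyContinuousOnInterval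

theorem MeasureTheory.LocallyIntegrableOn.continuousOn_setIntegral_Ioo {K : ℝ → ℝ} {a : ℝ}
    (hK : LocallyIntegrableOn K (Ici a)) : ContinuousOn (fun t => ∫ s in Ioo a t, K s) (Ici a) := by
  refine continuousOn_of_locally_continuousOn fun x hx =>
    ⟨Iio (x + 1), isOpen_Iio, lt_add_one x, ?_⟩
  have hax : a ≤ x + 1 := by linarith [mem_Ici.1 hx]
  have hint : IntegrableOn K (uIcc a (x + 1)) :=
    hK.integrableOn_compact_subset (uIcc_of_le hax ▸ Icc_subset_Ici_self) isCompact_uIcc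
  refine ((intervalIntegral.continuousOn_primitive_interval hint).mono fun t ht => ?_).congr
    fun t ht => ?_
  · rw [uIcc_of_le hax]
    exact ⟨ht.1, ht.2.le⟩
  · change ∫ s in Ioo a t, K s = ∫ s in a..t, K s
    rw [intervalIntegral.integral_of_le ht.1, integral_Ioc_eq_integral_Ioo]

def logGronwallBound (f₀ I : ℝ) : ℝ :=
  f₀ + I * (log f₀ * exp I) * exp (log f₀ * exp I)

namespace AbsolutelyContinuousOnInterval

theorem fun_sum {F ι : Type*} [SeminormedAddCommGroup F]
    {s : Finset ι} {f : ι → ℝ → F} {a b : ℝ}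
    (hf : ∀ i ∈ s, AbsolutelyContinuousOnInterval (f i) a b) :
    AbsolutelyContinuousOnInterval (fun x => ∑ i ∈ s, f i x) a b := by
  classical
  induction s using Finset.induction_on with
  | empty => simpa using absolutelyContinuousOnInterval_const (0 : F) a b
  | insert i s hi ih =>
    simp_rw [Finset.sum_insert hi]
    exact (hf i (Finset.mem_insert_self i s)).add
      (ih fun j hj => hf j (Finset.mem_insert_of_mem hj))

variable {f g b : ℝ → ℝ} {a t : ℝ}

theorem comp_locallyLipschitzOn {U : Set ℝ} (hf : AbsolutelyContinuousOnInterval f a t)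
    (hg : LocallyLipschitzOn U g) (hfU : MapsTo f (uIcc a t) U) :
    AbsolutelyContinuousOnInterval (g ∘ f) a t := by
  obtain ⟨L, hL⟩ := (hg.mono (image_subset_iff.2 hfU)).exists_lipschitzOnWith_of_compact
    (isCompact_uIcc.image_of_continuousOn hf.continuousOn)
  have hlim := (Tendsto.const_mul (L : ℝ) hf).trans_eq (by rw [mul_zero])
  refine squeeze_zero' (Eventually.of_forall fun _ => Finset.sum_nonneg fun _ _ => dist_nonneg)
    ((eventually_principal.2 fun E hE => ?_).filter_mono inf_le_right) hlim
  rw [Finset.mul_sum]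
  refine Finset.sum_le_sum fun i hi => hL.dist_le_mul _ ?_ _ ?_
  · exact mem_image_of_mem f (hE.1 i hi).1
  · exact mem_image_of_mem f (hE.1 i hi).2

theorem integrableOn_deriv_Ioo (hat : a ≤ t) (hf : AbsolutelyContinuousOnInterval f a t) :
    IntegrableOn (deriv f) (Ioo a t) :=
  ((intervalIntegrable_iff_integrableOn_Ioc_of_le hat).1 hf.intervalIntegrable_deriv).mono_set
    Ioo_subset_Ioc_self

theorem setIntegral_deriv_Ioo (hat : a ≤ t) (hf : AbsolutelyContinuousOnInterval f a t) :
    ∫ x in Ioo a t, deriv f x = f t - f a := by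
  rw [← integral_Ioc_eq_integral_Ioo, ← intervalIntegral.integral_of_le hat,
    hf.integral_deriv_eq_sub]

theorem integrableOn_of_deriv_add_le (hat : a ≤ t) (hf : AbsolutelyContinuousOnInterval f a t)
    (hg : IntegrableOn g (Ioo a t)) (hb : AEStronglyMeasurable b (volume.restrict (Ioo a t)))
    (hb0 : ∀ᵐ x ∂volume.restrict (Ioo a t), 0 ≤ b x)
    (h : ∀ᵐ x ∂volume.restrict (Ioo a t), deriv f x + b x ≤ g x) :
    IntegrableOn b (Ioo a t) := by
  refine (hg.sub (hf.integrableOn_deriv_Ioo hat)).mono' hb ?_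
  filter_upwards [hb0, h] with x hx0 hx
  rw [Real.norm_of_nonneg hx0, Pi.sub_apply]
  linarith

theorem add_setIntegral_le (hat : a ≤ t) (hf : AbsolutelyContinuousOnInterval f a t)
    (hg : IntegrableOn g (Ioo a t)) (hb : IntegrableOn b (Ioo a t))
    (h : ∀ᵐ x ∂volume.restrict (Ioo a t), deriv f x + b x ≤ g x) :
    f t + ∫ x in Ioo a t, b x ≤ f a + ∫ x in Ioo a t, g x := by
  have hf' := hf.integrableOn_deriv_Ioo hat
  have hmono := integral_mono_ae (f := fun x => deriv f x + b x) (hf'.add hb) hg h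
  rw [integral_add hf' hb, hf.setIntegral_deriv_Ioo hat] at hmono
  linarith

theorem log_le_log_mul_exp_integral {k : ℝ → ℝ} (hat : a ≤ t)
    (hf : AbsolutelyContinuousOnInterval f a t) (hf1 : ∀ x ∈ Icc a t, 1 < f x)
    (hk : IntegrableOn k (Ioo a t))
    (h : ∀ᵐ x ∂volume.restrict (Ioo a t), deriv f x ≤ k x * log (f x) * f x) :
    log (f t) ≤ log (f a) * exp (∫ x in Ioo a t, k x) := by
  have hloglog : LocallyLipschitzOn (Ioi 1) (fun y => log (log y)) := by
    have hC : ContDiffOn ℝ 1 (fun y => log (log y)) (Ioi 1) :=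
      (contDiffOn_id.log fun x hx => (zero_lt_one.trans hx).ne').log
        fun x hx => (log_pos hx).ne'
    exact hC.locallyLipschitzOn (convex_Ioi 1)
  have hψ : AbsolutelyContinuousOnInterval (fun x => log (log (f x))) a t :=
    hf.comp_locallyLipschitzOn (g := fun y => log (log y)) hloglog
      fun x hx => hf1 x (by rwa [uIcc_of_le hat] at hx)
  have hderiv :
      ∀ᵐ x ∂volume.restrict (Ioo a t), deriv (fun x => log (log (f x))) x + 0 ≤ k x := by
    rw [ae_restrict_iff' measurableSet_Ioo] at h ⊢
    filter_upwards [hf.ae_differentiableAt, h] with x hdiff hx hxI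
    have hfx := hf1 x (Ioo_subset_Icc_self hxI)
    have hlog := log_pos hfx
    have hd := ((hdiff (Icc_subset_uIcc (Ioo_subset_Icc_self hxI))).hasDerivAt.log
      (zero_lt_one.trans hfx).ne').log hlog.ne'
    rw [hd.deriv, add_zero, div_div, div_le_iff₀ (mul_pos (zero_lt_one.trans hfx) hlog)]
    linarith [hx hxI]
  have hmain := hψ.add_setIntegral_le hat hk integrableOn_zero hderiv
  rw [integral_zero, add_zero] at hmain
  have hpos : ∀ x ∈ Icc a t, 0 < log (f x) := fun x hx => log_pos (hf1 x hx)
  calc log (f t) = exp (log (log (f t))) := (exp_log (hpos t ⟨hat, le_rfl⟩)).symm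
    _ ≤ exp (log (log (f a)) + ∫ x in Ioo a t, k x) := exp_le_exp.2 hmain
    _ = log (f a) * exp (∫ x in Ioo a t, k x) := by
      rw [exp_add, exp_log (hpos a ⟨le_rfl, hat⟩)]

theorem add_setIntegral_le_logGronwallBound {k : ℝ → ℝ} (hat : a ≤ t)
    (hf : AbsolutelyContinuousOnInterval f a t) (hf1 : ∀ x ∈ Icc a t, 1 < f x)
    (hk : IntegrableOn k (Icc a t)) (hk0 : ∀ x, 0 ≤ k x)
    (hb : AEStronglyMeasurable b (volume.restrict (Ioo a t))) (hb0 : ∀ x, 0 ≤ b x)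
    (h : ∀ᵐ x ∂volume.restrict (Ioo a t), deriv f x + b x ≤ k x * log (f x) * f x) :
    IntegrableOn b (Ioo a t) ∧
      f t + ∫ x in Ioo a t, b x ≤ logGronwallBound (f a) (∫ x in Ioo a t, k x) := by
  set Λ := log (f a) * exp (∫ x in Ioo a t, k x)
  have hk' : IntegrableOn k (Ioo a t) := hk.mono_set Ioo_subset_Icc_self
  have hlog (s : ℝ) (hs : s ∈ Icc a t) : log (f s) ≤ Λ := by
    have hsub : Ioo a s ⊆ Ioo a t := Ioo_subset_Ioo_right hs.2
    calc log (f s) ≤ log (f a) * exp (∫ x in Ioo a s, k x) := by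
          refine (hf.mono ?_).log_le_log_mul_exp_integral hs.1
            (fun x hx => hf1 x ⟨hx.1, hx.2.trans hs.2⟩) (hk'.mono_set hsub) ?_
          · exact uIcc_subset_uIcc left_mem_uIcc (uIcc_of_le hat ▸ hs)
          · filter_upwards [ae_restrict_of_ae_restrict_of_subset hsub h] with x hx
            linarith [hb0 x]
      _ ≤ Λ := mul_le_mul_of_nonneg_left
          (exp_le_exp.2 (setIntegral_mono_set hk' (ae_of_all _ hk0) hsub.eventuallyLE))
          (log_pos (hf1 a ⟨le_rfl, hat⟩)).le
  have hfc : ContinuousOn f (Icc a t) := uIcc_of_le hat ▸ hf.continuousOn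
  have hg : IntegrableOn (fun x => k x * log (f x) * f x) (Ioo a t) := by
    have hlogf : ContinuousOn (fun x => log (f x)) (Icc a t) :=
      hfc.log fun x hx => (zero_lt_one.trans (hf1 x hx)).ne'
    have := hk.mul_continuousOn (hlogf.mul hfc) isCompact_Icc
    simpa only [mul_assoc, Pi.mul_apply] using this.mono_set Ioo_subset_Icc_self
  have hbint := hf.integrableOn_of_deriv_add_le hat hg hb (ae_of_all _ hb0) h
  refine ⟨hbint, (hf.add_setIntegral_le hat hg hbint h).trans ?_⟩
  have hbound : ∫ x in Ioo a t, k x * log (f x) * f x ≤ ∫ x in Ioo a t, k x * (Λ * exp Λ) := by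
    refine setIntegral_mono_on hg (hk'.mul_const _) measurableSet_Ioo fun x hx => ?_
    have hx' := Ioo_subset_Icc_self hx
    have hfx := zero_lt_one.trans (hf1 x hx')
    rw [mul_assoc]
    gcongr
    · exact hk0 x
    · exact (log_pos (hf1 x hx')).le.trans (hlog x hx')
    · exact hlog x hx'
    · exact (exp_log hfx).symm.le.trans (exp_le_exp.2 (hlog x hx'))
  rw [integral_mul_const] at hbound
  simp only [logGronwallBound]
  linarith

end AbsolutelyContinuousOnInterval

section LyapunovChain

variable (α ζ : ℝ)

def lyapunovChain (a : ℕ → ℝ) : ℕ → ℝ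
  | 0 => a 0
  | k + 1 => a (k + 1) + ζ * lyapunovChain a k ^ (α + 1)

def lyapunovChainDeriv (a a' : ℕ → ℝ) : ℕ → ℝ
  | 0 => a' 0
  | k + 1 => a' (k + 1) + ζ * ((α + 1) * lyapunovChain α ζ a k ^ α * lyapunovChainDeriv a a' k)

variable {α ζ}

theorem le_lyapunovChain (hζ : 0 ≤ ζ) {a : ℕ → ℝ} (ha : ∀ j, 0 ≤ a j) :
    ∀ k, a k ≤ lyapunovChain α ζ a k
  | 0 => le_rfl
  | k + 1 => le_add_of_nonneg_right <|
      mul_nonneg hζ (rpow_nonneg ((ha k).trans (le_lyapunovChain hζ ha k)) _)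

theorem hasDerivAt_lyapunovChain (hα : 0 ≤ α) {a : ℕ → ℝ → ℝ} {a' : ℕ → ℝ} {x : ℝ}
    (ha : ∀ j, HasDerivAt (a j) (a' j) x) :
    ∀ k, HasDerivAt (fun s => lyapunovChain α ζ (fun j => a j s) k)
      (lyapunovChainDeriv α ζ (fun j => a j x) a' k) x
  | 0 => ha 0
  | k + 1 => by
    have hpow := (hasDerivAt_lyapunovChain hα ha k).rpow_const (p := α + 1) (by right; linarith)
    rw [add_sub_cancel_right] at hpow
    refine ((ha (k + 1)).add (hpow.const_mul ζ)).congr_deriv ?_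
    simp only [lyapunovChainDeriv]
    ring

theorem lyapunovChainDeriv_add_le (hα : 0 ≤ α) (hζ : 0 ≤ ζ) {a a' b : ℕ → ℝ} {P : ℝ}
    (hP : 0 ≤ P) (ha : ∀ j, 0 ≤ a j) (hb : ∀ j, 0 ≤ b j) (h0 : a' 0 + b 0 ≤ P * a 0)
    (hsucc : ∀ j, a' (j + 1) + b (j + 1) ≤ P * a (j + 1) + ζ * a j ^ α * b j) :
    ∀ k, lyapunovChainDeriv α ζ a a' k + b k ≤ (α + 1) ^ k * P * lyapunovChain α ζ a k
  | 0 => by simpa [lyapunovChainDeriv, lyapunovChain] using h0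
  | k + 1 => by
    have ih := lyapunovChainDeriv_add_le hα hζ hP ha hb h0 hsucc k
    set G := lyapunovChain α ζ a k
    have hG : a k ≤ G := le_lyapunovChain hζ ha k
    have hGα : 0 ≤ G ^ α := rpow_nonneg ((ha k).trans hG) α
    have hcoef : 0 ≤ ζ * (α + 1) * G ^ α := by positivity
    have haG : a k ^ α ≤ (α + 1) * G ^ α :=
      (rpow_le_rpow (ha k) hG hα).trans (le_mul_of_one_le_left hGα (by linarith))
    have hcross := mul_le_mul_of_nonneg_left haG (mul_nonneg hζ (hb k))
    have hstep := mul_le_mul_of_nonneg_left ih hcoef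
    have hPa := le_mul_of_one_le_left (mul_nonneg hP (ha (k + 1)))
      (one_le_pow₀ (by linarith) : 1 ≤ (α + 1) ^ (k + 1))
    simp only [lyapunovChainDeriv, lyapunovChain]
    rw [rpow_add_one' ((ha k).trans hG) (by linarith)]
    rw [pow_succ] at hPa ⊢
    linear_combination hsucc k + hcross + hstep + hPa

end LyapunovChain

/-- Padding the indices `j ≥ n` with `0` keeps the differential inequalities true, so that the
chain can be run over all of `ℕ`. -/
def zeroExtend {β : Type*} [Zero β] {n : ℕ} (v : Fin n → β) (j : ℕ) : β :=
  if h : j < n then v ⟨j, h⟩ else 0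

theorem zeroExtend_nonneg {n : ℕ} {v : Fin n → ℝ} (hv : ∀ i, 0 ≤ v i) (j : ℕ) :
    0 ≤ zeroExtend v j := by
  unfold zeroExtend
  split_ifs
  exacts [hv _, le_rfl]

theorem sum_range_zeroExtend {n : ℕ} (v : Fin n → ℝ) :
    ∑ j ∈ Finset.range n, zeroExtend v j = ∑ i, v i :=
  (Finset.sum_fin_eq_sum_range v).symm

section Lyapunov

variable {n : ℕ} {α ζ : ℝ} {A : Fin n → ℝ → ℝ}

def cascadeForcing (α ζ : ℝ) (A B : Fin n → ℝ → ℝ) (i : Fin n) (x : ℝ) : ℝ :=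
  if (i : ℕ) = 0 then 0 else
    ζ * A ⟨(i : ℕ) - 1, Nat.lt_of_le_of_lt (Nat.sub_le _ _) i.isLt⟩ x ^ α
      * B ⟨(i : ℕ) - 1, Nat.lt_of_le_of_lt (Nat.sub_le _ _) i.isLt⟩ x

def lyapunov (α ζ : ℝ) (A : Fin n → ℝ → ℝ) (s : ℝ) : ℝ :=
  ∑ k ∈ Finset.range n, lyapunovChain α ζ (zeroExtend fun i => A i s) k

theorem sum_le_lyapunov (hζ : 0 ≤ ζ) {s : ℝ} (hA : ∀ i, 0 ≤ A i s) :
    ∑ i, A i s ≤ lyapunov α ζ A s := by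
  rw [← sum_range_zeroExtend]
  exact Finset.sum_le_sum fun k _ => le_lyapunovChain hζ (zeroExtend_nonneg hA) k

theorem absolutelyContinuousOnInterval_lyapunov (hα : 0 ≤ α) {a b : ℝ}
    (hA : ∀ i, AbsolutelyContinuousOnInterval (A i) a b) :
    AbsolutelyContinuousOnInterval (lyapunov α ζ A) a b := by
  have hext (j : ℕ) :
      AbsolutelyContinuousOnInterval (fun s => zeroExtend (fun i => A i s) j) a b := by
    unfold zeroExtend
    split_ifs
    exacts [hA _, absolutelyContinuousOnInterval_const 0 a b]
  have hpow : LocallyLipschitzOn univ fun y : ℝ => y ^ (α + 1) :=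
    locallyLipschitzOn_univ.2
      (contDiff_rpow_const_of_le (n := 1) (by push_cast; linarith)).locallyLipschitz
  have hchain (k : ℕ) : AbsolutelyContinuousOnInterval
      (fun s => lyapunovChain α ζ (zeroExtend fun i => A i s) k) a b := by
    induction k with
    | zero => exact hext 0
    | succ k ih =>
      exact (hext (k + 1)).add ((ih.comp_locallyLipschitzOn hpow (mapsTo_univ _ _)).const_mul ζ)
  exact AbsolutelyContinuousOnInterval.fun_sum fun k _ => hchain k

theorem deriv_lyapunov_add_sum_le (hα : 0 ≤ α) (hζ : 0 ≤ ζ) {B : Fin n → ℝ → ℝ} {P x : ℝ}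
    (hP : 0 ≤ P) (hA : ∀ i, 0 ≤ A i x) (hB : ∀ i, 0 ≤ B i x)
    (hdiff : ∀ i, DifferentiableAt ℝ (A i) x)
    (hode : ∀ i, deriv (A i) x + B i x ≤ P * A i x + cascadeForcing α ζ A B i x) :
    deriv (lyapunov α ζ A) x + ∑ i, B i x ≤ (α + 1) ^ n * P * lyapunov α ζ A x := by
  set a : ℕ → ℝ := zeroExtend fun i => A i x
  set a' : ℕ → ℝ := zeroExtend fun i => deriv (A i) x
  set b : ℕ → ℝ := zeroExtend fun i => B i x
  have ha : ∀ j, 0 ≤ a j := zeroExtend_nonneg hA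
  have hb : ∀ j, 0 ≤ b j := zeroExtend_nonneg hB
  have hder (j : ℕ) : HasDerivAt (fun s => zeroExtend (fun i => A i s) j) (a' j) x := by
    simp only [a', zeroExtend]
    split_ifs
    exacts [(hdiff _).hasDerivAt, hasDerivAt_const x 0]
  have h0 : a' 0 + b 0 ≤ P * a 0 := by
    simp only [a, a', b, zeroExtend]
    split_ifs with hn
    · simpa [cascadeForcing] using hode ⟨0, hn⟩
    · simp
  have hsucc (j : ℕ) : a' (j + 1) + b (j + 1) ≤ P * a (j + 1) + ζ * a j ^ α * b j := by
    by_cases hj : j + 1 < n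
    · simp only [a, a', b, zeroExtend, dif_pos hj, dif_pos (Nat.lt_of_succ_lt hj)]
      simpa [cascadeForcing] using hode ⟨j + 1, hj⟩
    · simp only [a, a', b, zeroExtend, dif_neg hj, mul_zero, add_zero, zero_add]
      exact mul_nonneg (mul_nonneg hζ (rpow_nonneg (ha j) α)) (hb j)
  have hchain := lyapunovChainDeriv_add_le hα hζ hP ha hb h0 hsucc
  have hΦ : HasDerivAt (lyapunov α ζ A)
      (∑ k ∈ Finset.range n, lyapunovChainDeriv α ζ a a' k) x :=
    HasDerivAt.fun_sum fun k _ => hasDerivAt_lyapunovChain hα hder k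
  rw [hΦ.deriv, ← sum_range_zeroExtend, ← Finset.sum_add_distrib, lyapunov, Finset.mul_sum]
  refine Finset.sum_le_sum fun k hk => (hchain k).trans ?_
  have hG : 0 ≤ P * lyapunovChain α ζ a k :=
    mul_nonneg hP ((ha k).trans (le_lyapunovChain hζ ha k))
  rw [mul_assoc, mul_assoc]
  exact mul_le_mul_of_nonneg_right
    (pow_le_pow_right₀ (by linarith) (Finset.mem_range.1 hk).le) hG

theorem ae_deriv_lyapunov_add_sum_le {B : Fin n → ℝ → ℝ} {K : ℝ → ℝ} {a t : ℝ} (hα : 0 ≤ α)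
    (hζ : 0 ≤ ζ) (hA : ∀ i, AbsolutelyContinuousOnInterval (A i) a t)
    (hA0 : ∀ i s, 0 ≤ A i s) (hS : ∀ s, 1 ≤ ∑ i, A i s) (hB0 : ∀ i s, 0 ≤ B i s)
    (hK0 : ∀ s, 0 ≤ K s)
    (hode : ∀ᵐ x ∂volume.restrict (Ioo a t), ∀ i,
      deriv (A i) x + B i x ≤ K x * log (∑ j, A j x) * A i x + cascadeForcing α ζ A B i x) :
    ∀ᵐ x ∂volume.restrict (Ioo a t), deriv (lyapunov α ζ A) x + ∑ i, B i x ≤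
      (α + 1) ^ n * K x * log (lyapunov α ζ A x) * lyapunov α ζ A x := by
  have hdiff : ∀ᵐ x ∂volume.restrict (Ioo a t), ∀ i, DifferentiableAt ℝ (A i) x :=
    ae_all_iff.2 fun i => (ae_restrict_iff' measurableSet_Ioo).2 <|
      (hA i).ae_differentiableAt.mono fun x hx hxI =>
        hx (Icc_subset_uIcc (Ioo_subset_Icc_self hxI))
  filter_upwards [hdiff, hode] with x hdx hx
  have hSΦ := sum_le_lyapunov (α := α) hζ (hA0 · x)
  have hlog : log (∑ j, A j x) ≤ log (lyapunov α ζ A x) :=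
    log_le_log (zero_lt_one.trans_le (hS x)) hSΦ
  have hP : 0 ≤ K x * log (∑ j, A j x) := mul_nonneg (hK0 x) (log_nonneg (hS x))
  refine (deriv_lyapunov_add_sum_le hα hζ hP (hA0 · x) (hB0 · x) hdx hx).trans ?_
  have hΦ : 0 ≤ lyapunov α ζ A x := (Finset.sum_nonneg fun i _ => hA0 i x).trans hSΦ
  have hCK : 0 ≤ (α + 1) ^ n * K x := mul_nonneg (pow_nonneg (by linarith) n) (hK0 x)
  rw [← mul_assoc]
  gcongr

theorem sum_add_sum_setIntegral_le_logGronwallBound (hn : 0 < n) {B : Fin n → ℝ → ℝ}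
    {K : ℝ → ℝ} {a t : ℝ} (hα : 0 ≤ α) (hζ : 0 ≤ ζ) (hat : a ≤ t)
    (hA : ∀ i, AbsolutelyContinuousOnInterval (A i) a t) (hA1 : ∀ i s, 1 < A i s)
    (hB : ∀ i, Measurable (B i)) (hB0 : ∀ i s, 0 ≤ B i s) (hK : IntegrableOn K (Icc a t))
    (hK0 : ∀ s, 0 ≤ K s)
    (hode : ∀ᵐ x ∂volume.restrict (Ioo a t), ∀ i,
      deriv (A i) x + B i x ≤ K x * log (∑ j, A j x) * A i x + cascadeForcing α ζ A B i x) :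
    ∑ i, A i t + ∑ i, ∫ s in Ioo a t, B i s ≤
      logGronwallBound (lyapunov α ζ A a) (∫ s in Ioo a t, (α + 1) ^ n * K s) := by
  have hA0 (i : Fin n) (s : ℝ) : 0 ≤ A i s := zero_le_one.trans (hA1 i s).le
  have hS (s : ℝ) : 1 < ∑ i, A i s :=
    (hA1 ⟨0, hn⟩ s).trans_le (Finset.single_le_sum (fun i _ => hA0 i s) (Finset.mem_univ _))
  obtain ⟨hBint, hmain⟩ :=
    (absolutelyContinuousOnInterval_lyapunov hα hA).add_setIntegral_le_logGronwallBound hat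
      (fun s _ => (hS s).trans_le (sum_le_lyapunov hζ (hA0 · s))) (hK.const_mul _)
      (fun s => mul_nonneg (pow_nonneg (by linarith) n) (hK0 s))
      (Finset.aemeasurable_fun_sum _ fun i _ => (hB i).aemeasurable).aestronglyMeasurable
      (fun s => Finset.sum_nonneg fun i _ => hB0 i s)
      (ae_deriv_lyapunov_add_sum_le hα hζ hA hA0 (fun s => (hS s).le) hB0 hK0 hode)
  have hBi (i : Fin n) : IntegrableOn (B i) (Ioo a t) :=
    hBint.mono' (hB i).aestronglyMeasurable <| ae_of_all _ fun s => by
      rw [norm_of_nonneg (hB0 i s)]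
      exact Finset.single_le_sum (fun j _ => hB0 j s) (Finset.mem_univ i)
  rw [← integral_finsetSum _ fun i _ => hBi i]
  refine le_trans ?_ hmain
  gcongr
  exact sum_le_lyapunov hζ (hA0 · t)

end Lyapunov

theorem gronwall_logarithmic_system_general
    (n : ℕ) (hn : 0 < n) (α ζ : ℝ) (hα : 1 ≤ α) (hζ : 1 ≤ ζ)
    (K : ℝ → ℝ) (hK0 : ∀ t, 0 ≤ K t) (hKloc : LocallyIntegrableOn K (Ici 0))
    (a₀ : Fin n → ℝ) :
    ∃ Q : ℝ → ℝ, ContinuousOn Q (Ici 0) ∧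
      ∀ 𝒯 > (0 : ℝ), ∀ A B : Fin n → ℝ → ℝ,
        (∀ i t, Real.exp 1 ≤ A i t) →
        (∀ i t, 0 ≤ B i t) →
        (∀ i, Measurable (B i)) →
        (∀ i, AbsContOn (A i) 0 𝒯) →
        (∀ i, A i 0 = a₀ i) →
        (∀ᵐ t ∂(volume.restrict (Ioo (0 : ℝ) 𝒯)), ∀ i : Fin n,
          deriv (A i) t + B i t
            ≤ K t * Real.log (∑ j, A j t) * A i t
              + if hi : (i : ℕ) = 0 then 0 else
                  ζ * A ⟨(i : ℕ) - 1, Nat.lt_of_le_of_lt (Nat.sub_le _ _) i.isLt⟩ t ^ α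
                    * B ⟨(i : ℕ) - 1, Nat.lt_of_le_of_lt (Nat.sub_le _ _) i.isLt⟩ t) →
        ∀ t ∈ Ico (0 : ℝ) 𝒯,
          (∑ i, A i t) + ∑ i, (∫ s in Ioo (0 : ℝ) t, B i s) ≤ Q t := by
  have hCK : LocallyIntegrableOn (fun s => (α + 1) ^ n * K s) (Ici 0) :=
    hKloc.smul ((α + 1) ^ n)
  refine ⟨fun t => logGronwallBound (lyapunov α ζ (fun i _ => a₀ i) 0)
    (∫ s in Ioo 0 t, (α + 1) ^ n * K s), ?_, ?_⟩
  · have := hCK.continuousOn_setIntegral_Ioo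
    unfold logGronwallBound
    fun_prop
  intro 𝒯 h𝒯 A B hAe hB0 hBm hAac hA0 hode t ⟨ht0, ht𝒯⟩
  have hΦ0 : lyapunov α ζ A 0 = lyapunov α ζ (fun i _ => a₀ i) 0 := by
    simp only [lyapunov, hA0]
  rw [← hΦ0]
  refine sum_add_sum_setIntegral_le_logGronwallBound hn (by linarith) (by linarith) ht0
    (fun i => ((hAac i).absolutelyContinuousOnInterval h𝒯.le).mono ?_)
    (fun i s => (one_lt_exp_iff.2 one_pos).trans_le (hAe i s)) hBm hB0
    (hKloc.integrableOn_compact_subset Icc_subset_Ici_self isCompact_Icc) hK0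
    (ae_restrict_of_ae_restrict_of_subset (Ioo_subset_Ioo_right ht𝒯.le) hode)
  exact uIcc_subset_uIcc left_mem_uIcc (uIcc_of_le h𝒯.le ▸ ⟨ht0, ht𝒯.le⟩)

/-- **Lemma (Cao–Li–Titi).** A logarithmic system version of the Gronwall inequality:
if nonnegative absolutely continuous functions `A i ≥ e` and nonnegative `B i` satisfy
`A₁' + B₁ ≤ K (log ∑ A_j) A₁` and, for `i ≥ 2`,
`A_i' + B_i ≤ K (log ∑ A_j) A_i + ζ A_{i-1}^α B_{i-1}` a.e. on `(0,𝒯)`,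
with `α, ζ ≥ 1` and `K ∈ L¹_loc([0,∞))`, then
`∑ A_i(t) + ∑ ∫₀^t B_i ≤ Q(t)` on `[0,𝒯)`, where the continuous function `Q` is
determined only by the initial values `A_i(0)` and by `K`. -/
theorem gronwall_logarithmic_system
    (n : ℕ) (hn : 0 < n) (α ζ : ℝ) (hα : 1 ≤ α) (hζ : 1 ≤ ζ)
    (m : ℝ → ℝ) (hm : ∀ t, 0 ≤ m t) (K : ℝ → ℝ) (hK0 : ∀ t, 0 ≤ K t) (hKloc : LocallyIntegrableOn K (Ici 0))
    (a₀ : Fin n → ℝ) :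
    ∃ Q : ℝ → ℝ, ContinuousOn Q (Ici 0) ∧
      ∀ 𝒯 > (0 : ℝ), ∀ A B : Fin n → ℝ → ℝ,
        (∀ i t, Real.exp 1 ≤ A i t) →
        (∀ i t, 0 ≤ B i t) →
        (∀ i, Measurable (B i)) →
        (∀ i, AbsContOn (A i) 0 𝒯) →
        (∀ i, A i 0 = a₀ i) →
        (∀ᵐ t ∂(volume.restrict (Ioo (0 : ℝ) 𝒯)), ∀ i : Fin n,
          deriv (A i) t + B i t
            ≤ K t * Real.log (∑ j, A j t) * A i t
              + if hi : (i : ℕ) = 0 then 0 else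
                  ζ * A ⟨(i : ℕ) - 1, Nat.lt_of_le_of_lt (Nat.sub_le _ _) i.isLt⟩ t ^ α
                    * B ⟨(i : ℕ) - 1, Nat.lt_of_le_of_lt (Nat.sub_le _ _) i.isLt⟩ t) →
        ∀ t ∈ Ico (0 : ℝ) 𝒯,
          (∑ i, A i t) + ∑ i, (∫ s in Ioo (0 : ℝ) t, B i s) ≤ Q t :=
  gronwall_logarithmic_system_general n hn α ζ hα hζ K hK0 hKloc a₀
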